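/- arXiv:2403.01141 — 3 statements merged into one kernel-verified Lean document; each statement's English description precedes it below -/
import Mathlib

section
/- Let S : ℝᵈ×ℝᵈ → ℝ be continuous, coercive, diagonal-periodic, and let u, v be continuous ℤᵈ-periodic functions with u = T⁻[v]. For x, y ∈ ℝᵈ, the following are equivalent: (i) x attains the infimum in T⁻[v](y) = inf_z {v(z) + S(z,y)}; (ii) y attains the supremum in T⁺[u](x) = sup_z {u(z) − S(x,z)} and T⁺∘T⁻[v](x) = v(x). -/
/-! Write `u := T⁻[v]`. Whenever all the infima defining `T⁻[v]` are finite, `u y ≤ v x + S x y`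
for every `x`, so that `T⁺[u](x) ≤ v x` always holds, with equality at the competitor `y`
exactly when `u y = v x + S x y`; both conditions in the statement say this. The infima are
finite because `v` (continuous and periodic) and each `S (·, y)` (continuous and coercive) are
bounded below. -/

open Filter Topology

/-- The discrete backward Lax-Oleinik operator. -/
noncomputable def Tminus {d : ℕ} (S : (Fin d → ℝ) → (Fin d → ℝ) → ℝ)
    (u : (Fin d → ℝ) → ℝ) : (Fin d → ℝ) → ℝ :=
  fun y => ⨅ x, (u x + S x y)

/-- The discrete forward Lax-Oleinik operator. -/
noncomputable def Tplus {d : ℕ} (S : (Fin d → ℝ) → (Fin d → ℝ) → ℝ)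
    (u : (Fin d → ℝ) → ℝ) : (Fin d → ℝ) → ℝ :=
  fun x => ⨆ y, (u y - S x y)

/-- ℤᵈ-periodicity. -/
def ZPeriodic {d : ℕ} (u : (Fin d → ℝ) → ℝ) : Prop :=
  ∀ (m : Fin d → ℤ) (x : Fin d → ℝ), u (x + fun i => (m i : ℝ)) = u x

/-- Coercivity: S(x,y) → +∞ as ‖x−y‖ → ∞. -/
def Coercive {d : ℕ} (S : (Fin d → ℝ) → (Fin d → ℝ) → ℝ) : Prop :=
  ∀ M : ℝ, ∃ R : ℝ, ∀ x y : Fin d → ℝ, R ≤ ‖x - y‖ → M ≤ S x y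

/-- Diagonal periodicity: S(x+m, y+m) = S(x,y) for m ∈ ℤᵈ. -/
def DiagPeriodic {d : ℕ} (S : (Fin d → ℝ) → (Fin d → ℝ) → ℝ) : Prop :=
  ∀ (m : Fin d → ℤ) (x y : Fin d → ℝ),
    S (x + fun i => (m i : ℝ)) (y + fun i => (m i : ℝ)) = S x y

open Set

section

variable {d : ℕ}

theorem ZPeriodic.bddBelow_range {v : (Fin d → ℝ) → ℝ} (hvp : ZPeriodic v) (hv : Continuous v) :
    BddBelow (range v) := by
  refine ((isCompact_Icc (a := (0 : Fin d → ℝ)) (b := 1)).bddBelow_image hv.continuousOn).mono ?_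
  rintro _ ⟨w, rfl⟩
  refine ⟨fun i => Int.fract (w i), ⟨fun i => Int.fract_nonneg _, fun i => (Int.fract_lt_one _).le⟩,
    ?_⟩
  have hw : ((fun i => Int.fract (w i)) + fun i => ((⌊w i⌋ : ℤ) : ℝ)) = w :=
    funext fun i => Int.fract_add_floor (w i)
  rw [← hvp (fun i => ⌊w i⌋), hw]

theorem Coercive.bddBelow_range_left {S : (Fin d → ℝ) → (Fin d → ℝ) → ℝ} (hco : Coercive S)
    {y : Fin d → ℝ} (hS : Continuous fun x => S x y) : BddBelow (range fun x => S x y) := by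
  obtain ⟨R, hR⟩ := hco 0
  obtain ⟨c, hc⟩ := (isCompact_closedBall y R).bddBelow_image hS.continuousOn
  refine ⟨min c 0, ?_⟩
  rintro _ ⟨x, rfl⟩
  by_cases hx : x ∈ Metric.closedBall y R
  · exact (min_le_left _ _).trans (hc (mem_image_of_mem _ hx))
  · rw [Metric.mem_closedBall, not_le, dist_eq_norm] at hx
    exact (min_le_right _ _).trans (hR x y hx.le)

variable {S : (Fin d → ℝ) → (Fin d → ℝ) → ℝ} {v u : (Fin d → ℝ) → ℝ} {x y : Fin d → ℝ}

theorem Tminus_le_add (h : BddBelow (range fun x => v x + S x y)) (x : Fin d → ℝ) :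
    Tminus S v y ≤ v x + S x y :=
  ciInf_le h x

theorem Tminus_eq_of_forall_le (h : ∀ z, v x + S x y ≤ v z + S z y) :
    Tminus S v y = v x + S x y :=
  le_antisymm (ciInf_le ⟨_, forall_mem_range.2 h⟩ x) (le_ciInf h)

theorem Tplus_eq_of_forall_le (h : ∀ z, u z - S x z ≤ u y - S x y) :
    Tplus S u x = u y - S x y :=
  le_antisymm (ciSup_le h) (le_ciSup ⟨_, forall_mem_range.2 h⟩ y)

theorem Tplus_Tminus_le (hbdd : ∀ z, BddBelow (range fun w => v w + S w z)) (x : Fin d → ℝ) :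
    Tplus S (Tminus S v) x ≤ v x :=
  ciSup_le fun z => by linarith [Tminus_le_add (hbdd z) x]

theorem forall_le_iff_of_bddBelow (hbdd : ∀ z, BddBelow (range fun w => v w + S w z)) :
    (∀ z, v x + S x y ≤ v z + S z y) ↔
      ((∀ z, Tminus S v z - S x z ≤ Tminus S v y - S x y) ∧ Tplus S (Tminus S v) x = v x) := by
  constructor
  · intro hmin
    have hy := Tminus_eq_of_forall_le hmin
    have hmax : ∀ z, Tminus S v z - S x z ≤ Tminus S v y - S x y := fun z => by
      linarith [Tminus_le_add (hbdd z) x]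
    refine ⟨hmax, le_antisymm (Tplus_Tminus_le hbdd x) ?_⟩
    rw [Tplus_eq_of_forall_le hmax, hy]
    linarith
  · rintro ⟨hmax, hcontact⟩ z
    rw [Tplus_eq_of_forall_le hmax] at hcontact
    linarith [Tminus_le_add (hbdd y) z]

end

theorem backward_min_iff_forward_max_general {d : ℕ} (S : (Fin d → ℝ) → (Fin d → ℝ) → ℝ)
    (hS : Continuous fun p : (Fin d → ℝ) × (Fin d → ℝ) => S p.1 p.2)
    (hco : Coercive S)
    (v u : (Fin d → ℝ) → ℝ) (hv : Continuous v) (hvp : ZPeriodic v)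
    (hu : u = Tminus S v) (x y : Fin d → ℝ) :
    (∀ z, v x + S x y ≤ v z + S z y) ↔
      ((∀ z, u z - S x z ≤ u y - S x y) ∧ Tplus S (Tminus S v) x = v x) := by
  subst hu
  refine forall_le_iff_of_bddBelow fun z => (hvp.bddBelow_range hv).range_add ?_
  exact hco.bddBelow_range_left (hS.comp (continuous_id.prodMk continuous_const))

/-- Equivalence between attaining the backward infimum and attaining the
forward supremum together with the contact condition T⁺∘T⁻[v](x) = v(x). -/
theorem backward_min_iff_forward_max {d : ℕ} (S : (Fin d → ℝ) → (Fin d → ℝ) → ℝ)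
    (hS : Continuous fun p : (Fin d → ℝ) × (Fin d → ℝ) => S p.1 p.2)
    (hco : Coercive S) (hdp : DiagPeriodic S)
    (v u : (Fin d → ℝ) → ℝ) (hv : Continuous v) (hvp : ZPeriodic v)
    (hu : u = Tminus S v) (x y : Fin d → ℝ) :
    (∀ z, v x + S x y ≤ v z + S z y) ↔
      ((∀ z, u z - S x z ≤ u y - S x y) ∧ Tplus S (Tminus S v) x = v x) :=
  backward_min_iff_forward_max_general S hS hco v u hv hvp hu x y
end

section
/- Let S : ℝᵈ×ℝᵈ → ℝ be continuous, coercive, and diagonal-periodic, and let v : ℝᵈ → ℝ be continuous and ℤᵈ-periodic with u = T⁻[v]. Then the optimal forward map Σ₊[u] is surjective: for every y ∈ ℝᵈ there exists x ∈ ℝᵈ with y ∈ argmax_z {u(z) − S(x,z)}. -/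
/-! Fix `y` and pick a minimiser `x` of `x' ↦ v x' + S x' y`; it exists because `v` is bounded
below by periodicity and `S · y` is coercive. Then `u y = v x + S x y`, while `u z ≤ v x + S x z`
for every `z`, so `z ↦ u z - S x z` is maximal at `y`. -/

open Filter Topology

lemma ZPeriodic.exists_forall_le {d : ℕ} {v : (Fin d → ℝ) → ℝ} (hvp : ZPeriodic v)
    (hv : Continuous v) : ∃ x₀, ∀ x, v x₀ ≤ v x := by
  obtain ⟨x₀, -, hmin⟩ :=
    (isCompact_Icc (a := (0 : Fin d → ℝ)) (b := 1)).exists_isMinOn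
      (Set.nonempty_Icc.2 zero_le_one) hv.continuousOn
  refine ⟨x₀, fun x => ?_⟩
  have hfract : (x + fun i => ((-⌊x i⌋ : ℤ) : ℝ)) = fun i => Int.fract (x i) := by
    ext i
    simp [← Int.self_sub_floor, sub_eq_add_neg]
  rw [← hvp (fun i => -⌊x i⌋) x, hfract]
  exact hmin ⟨fun i => Int.fract_nonneg _, fun i => (Int.fract_lt_one _).le⟩

lemma Coercive.tendsto_cocompact {d : ℕ} {S : (Fin d → ℝ) → (Fin d → ℝ) → ℝ} (hco : Coercive S)
    (y : Fin d → ℝ) : Tendsto (fun x => S x y) (cocompact _) atTop := by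
  refine tendsto_atTop.2 fun M => ?_
  obtain ⟨R, hR⟩ := hco M
  filter_upwards [(isCompact_closedBall y R).compl_mem_cocompact] with x hx
  rw [Set.mem_compl_iff, Metric.mem_closedBall, not_le, dist_eq_norm] at hx
  exact hR x y hx.le

lemma Coercive.exists_forall_add_le {d : ℕ} {S : (Fin d → ℝ) → (Fin d → ℝ) → ℝ}
    (hco : Coercive S) (hS : ∀ y, Continuous fun x => S x y) {v : (Fin d → ℝ) → ℝ}
    (hv : Continuous v) {B : ℝ} (hB : ∀ x, B ≤ v x) (y : Fin d → ℝ) :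
    ∃ x, ∀ x', v x + S x y ≤ v x' + S x' y :=
  (hv.add (hS y)).exists_forall_le
    (tendsto_atTop_add_left_of_le _ B hB (hco.tendsto_cocompact y))

lemma Tminus_le_of_forall_add_le {d : ℕ} {S : (Fin d → ℝ) → (Fin d → ℝ) → ℝ}
    {v : (Fin d → ℝ) → ℝ} {x y : Fin d → ℝ} (hx : ∀ x', v x + S x y ≤ v x' + S x' y)
    (x' : Fin d → ℝ) : Tminus S v y ≤ v x' + S x' y :=
  ciInf_le ⟨_, Set.forall_mem_range.2 hx⟩ x'

lemma Tminus_eq_of_forall_add_le {d : ℕ} {S : (Fin d → ℝ) → (Fin d → ℝ) → ℝ}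
    {v : (Fin d → ℝ) → ℝ} {x y : Fin d → ℝ} (hx : ∀ x', v x + S x y ≤ v x' + S x' y) :
    Tminus S v y = v x + S x y :=
  le_antisymm (Tminus_le_of_forall_add_le hx x) (le_ciInf hx)

theorem optimal_forward_map_surjective_general {d : ℕ} (S : (Fin d → ℝ) → (Fin d → ℝ) → ℝ)
    (hS : Continuous fun p : (Fin d → ℝ) × (Fin d → ℝ) => S p.1 p.2)
    (hco : Coercive S)
    (v u : (Fin d → ℝ) → ℝ) (hv : Continuous v) (hvp : ZPeriodic v)
    (hu : u = Tminus S v) :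
    ∀ y : Fin d → ℝ, ∃ x : Fin d → ℝ, ∀ z, u z - S x z ≤ u y - S x y := by
  obtain ⟨x₀, hx₀⟩ := hvp.exists_forall_le hv
  have hminimiser := hco.exists_forall_add_le (fun y => hS.comp (.prodMk_left y)) hv hx₀
  intro y
  obtain ⟨x, hx⟩ := hminimiser y
  refine ⟨x, fun z => ?_⟩
  obtain ⟨_, hxz⟩ := hminimiser z
  have huz : u z ≤ v x + S x z := hu ▸ Tminus_le_of_forall_add_le hxz x
  have huy : u y = v x + S x y := hu ▸ Tminus_eq_of_forall_add_le hx
  linarith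

/-- The optimal forward map of u = T⁻[v] is surjective. -/
theorem optimal_forward_map_surjective {d : ℕ} (S : (Fin d → ℝ) → (Fin d → ℝ) → ℝ)
    (hS : Continuous fun p : (Fin d → ℝ) × (Fin d → ℝ) => S p.1 p.2)
    (hco : Coercive S) (hdp : DiagPeriodic S)
    (v u : (Fin d → ℝ) → ℝ) (hv : Continuous v) (hvp : ZPeriodic v)
    (hu : u = Tminus S v) :
    ∀ y : Fin d → ℝ, ∃ x : Fin d → ℝ, ∀ z, u z - S x z ≤ u y - S x y :=
  optimal_forward_map_surjective_general S hS hco v u hv hvp hu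
end

section
/- Let v : ℝᵈ → ℝ be ℤᵈ-periodic and semiconcave with linear modulus, and let S : ℝᵈ×ℝᵈ → ℝ be continuous, coercive, diagonal-periodic, locally semiconcave, and ferromagnetic. Then the optimal backward map Σ₋[v] is injective: if some x attains both infima inf_z {v(z)+S(z,y₁)} and inf_z {v(z)+S(z,y₂)}, then y₁ = y₂. -/
open Filter Topology

/-- Semiconcavity with a linear modulus. -/
def Semiconcave {d : ℕ} (v : (Fin d → ℝ) → ℝ) : Prop :=
  ∃ C : ℝ, 0 ≤ C ∧ ∀ x y : Fin d → ℝ, ∀ θ : ℝ, θ ∈ Set.Icc (0:ℝ) 1 →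
    θ * v x + (1 - θ) * v y - v (θ • x + (1 - θ) • y) ≤
      C / 2 * θ * (1 - θ) * ‖x - y‖ ^ 2

/-- Local semiconcavity (with linear modulus) on a normed space. -/
def LocallySemiconcave {E : Type*} [NormedAddCommGroup E] [NormedSpace ℝ E]
    (f : E → ℝ) : Prop :=
  ∀ x : E, ∃ U ∈ 𝓝 x, Convex ℝ U ∧ ∃ C : ℝ, 0 ≤ C ∧
    ∀ y ∈ U, ∀ z ∈ U, ∀ θ : ℝ, θ ∈ Set.Icc (0:ℝ) 1 →
      θ * f y + (1 - θ) * f z - f (θ • y + (1 - θ) • z) ≤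
        C / 2 * θ * (1 - θ) * ‖y - z‖ ^ 2

/-- The ferromagnetic property: S is C¹ and the partial-derivative maps
`y ↦ ∂₁S(x,y)` and `x ↦ ∂₂S(x,y)` are homeomorphisms. -/
def Ferromagnetic {d : ℕ} (S : (Fin d → ℝ) → (Fin d → ℝ) → ℝ) : Prop :=
  ContDiff ℝ 1 (fun p : (Fin d → ℝ) × (Fin d → ℝ) => S p.1 p.2) ∧
  (∀ x : Fin d → ℝ, ∃ h : (Fin d → ℝ) ≃ₜ ((Fin d → ℝ) →L[ℝ] ℝ),
      ∀ y, h y = fderiv ℝ (fun t => S t y) x) ∧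
  (∀ y : Fin d → ℝ, ∃ h : (Fin d → ℝ) ≃ₜ ((Fin d → ℝ) →L[ℝ] ℝ),
      ∀ x, h x = fderiv ℝ (fun t => S x t) y)

/-!
If `x` minimizes both `v + S(·, y₁)` and `v + S(·, y₂)`, then `-∂₁S(x, y₁)` and `-∂₁S(x, y₂)` are
both subgradients of `v` at `x`, which semiconcavity forbids unless they agree. Concretely,
semiconcavity gives `v(x + h) + v(x - h) ≤ 2 v(x) + C‖h‖²`, so adding the two minimality
inequalities at `x + h` and `x - h` shows that `h ↦ S(x + h, y₁) + S(x - h, y₂) + C‖h‖²` is minimal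
at `h = 0`. Its derivative `∂₁S(x, y₁) - ∂₁S(x, y₂)` there vanishes, and since `y ↦ ∂₁S(x, y)` is
injective for a ferromagnetic `S`, `y₁ = y₂`.
-/

section NormedSpace

variable {E : Type*} [NormedAddCommGroup E] [NormedSpace ℝ E]

theorem hasFDerivAt_norm_sq_zero : HasFDerivAt (fun h : E => ‖h‖ ^ 2) (0 : E →L[ℝ] ℝ) 0 := by
  rw [hasFDerivAt_iff_isLittleO_nhds_zero]
  simpa using Asymptotics.isLittleO_norm_pow_id (E' := E) one_lt_two

theorem HasFDerivAt.eq_zero_of_forall_le_add_mul_norm_sq {φ : E → ℝ} {L : E →L[ℝ] ℝ}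
    (hφ : HasFDerivAt φ L 0) (C : ℝ) (hle : ∀ h, φ 0 ≤ φ h + C * ‖h‖ ^ 2) : L = 0 := by
  have hmin : IsLocalMin (fun h => φ h + C * ‖h‖ ^ 2) 0 :=
    Eventually.of_forall fun h => by simpa using hle h
  simpa using hmin.hasFDerivAt_eq_zero (hφ.add (hasFDerivAt_norm_sq_zero.const_mul C))

theorem hasFDerivAt_comp_add_add_comp_sub {f g : E → ℝ} {f' g' : E →L[ℝ] ℝ} {x : E}
    (hf : HasFDerivAt f f' x) (hg : HasFDerivAt g g' x) :
    HasFDerivAt (fun h => f (x + h) + g (x - h)) (f' - g') 0 := by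
  have hf₀ : HasFDerivAt (fun h => f (x + h)) f' 0 := by
    rw [← add_zero x] at hf
    simpa [Function.comp_def] using hf.comp 0 ((hasFDerivAt_id (0 : E)).const_add x)
  have hg₀ : HasFDerivAt (fun h => g (x - h)) (-g') 0 := by
    rw [← sub_zero x] at hg
    simpa [Function.comp_def] using hg.comp 0 ((hasFDerivAt_id (0 : E)).const_sub x)
  rw [sub_eq_add_neg f' g']
  exact hf₀.add hg₀

theorem HasFDerivAt.unique_of_common_minimizer {v f g : E → ℝ} {f' g' : E →L[ℝ] ℝ} {x : E} {C : ℝ}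
    (hv : ∀ h, v (x + h) + v (x - h) ≤ 2 * v x + C * ‖h‖ ^ 2)
    (hf : HasFDerivAt f f' x) (hg : HasFDerivAt g g' x)
    (hfmin : ∀ z, v x + f x ≤ v z + f z) (hgmin : ∀ z, v x + g x ≤ v z + g z) : f' = g' := by
  have hsum := hasFDerivAt_comp_add_add_comp_sub hf hg
  refine sub_eq_zero.mp <| hsum.eq_zero_of_forall_le_add_mul_norm_sq C fun h => ?_
  have hvh := hv h
  have hfh := hfmin (x + h)
  have hgh := hgmin (x - h)
  simp only [add_zero, sub_zero]
  linarith

end NormedSpace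

theorem Semiconcave.exists_forall_add_add_le {d : ℕ} {v : (Fin d → ℝ) → ℝ} (hv : Semiconcave v) :
    ∃ C : ℝ, ∀ x h, v (x + h) + v (x - h) ≤ 2 * v x + C * ‖h‖ ^ 2 := by
  obtain ⟨C, -, hC⟩ := hv
  refine ⟨C, fun x h => ?_⟩
  have hmid := hC (x + h) (x - h) (1 / 2) ⟨by norm_num, by norm_num⟩
  have hx : (1 / 2 : ℝ) • (x + h) + (1 - 1 / 2 : ℝ) • (x - h) = x := by module
  have hnorm : ‖x + h - (x - h)‖ ^ 2 = 4 * ‖h‖ ^ 2 := by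
    rw [show x + h - (x - h) = (2 : ℝ) • h by module, norm_smul]
    norm_num
    ring
  rw [hx, hnorm] at hmid
  linarith

theorem Ferromagnetic.differentiableAt_fst {d : ℕ} {S : (Fin d → ℝ) → (Fin d → ℝ) → ℝ}
    (hS : Ferromagnetic S) (x y : Fin d → ℝ) : DifferentiableAt ℝ (fun t => S t y) x :=
  ((hS.1.comp (contDiff_id.prodMk contDiff_const)).differentiable one_ne_zero).differentiableAt

theorem Ferromagnetic.injective_fderiv_fst {d : ℕ} {S : (Fin d → ℝ) → (Fin d → ℝ) → ℝ}
    (hS : Ferromagnetic S) (x : Fin d → ℝ) :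
    Function.Injective fun y => fderiv ℝ (fun t => S t y) x := by
  obtain ⟨e, he⟩ := hS.2.1 x
  simpa only [← he] using e.injective

theorem optimal_backward_map_injective_general {d : ℕ} (S : (Fin d → ℝ) → (Fin d → ℝ) → ℝ)
    (hfer : Ferromagnetic S)
    (v : (Fin d → ℝ) → ℝ) (hv : Semiconcave v)
    (x y₁ y₂ : Fin d → ℝ)
    (h1 : ∀ z, v x + S x y₁ ≤ v z + S z y₁)
    (h2 : ∀ z, v x + S x y₂ ≤ v z + S z y₂) :
    y₁ = y₂ := by
  obtain ⟨C, hC⟩ := hv.exists_forall_add_add_le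
  exact hfer.injective_fderiv_fst x <| HasFDerivAt.unique_of_common_minimizer (hC x)
    (hfer.differentiableAt_fst x y₁).hasFDerivAt (hfer.differentiableAt_fst x y₂).hasFDerivAt h1 h2

/-- The optimal backward map Σ₋[v] of a semiconcave v is injective. -/
theorem optimal_backward_map_injective {d : ℕ} (S : (Fin d → ℝ) → (Fin d → ℝ) → ℝ)
    (hS : Continuous fun p : (Fin d → ℝ) × (Fin d → ℝ) => S p.1 p.2)
    (hco : Coercive S) (hdp : DiagPeriodic S)
    (hlsc : LocallySemiconcave fun p : (Fin d → ℝ) × (Fin d → ℝ) => S p.1 p.2)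
    (hfer : Ferromagnetic S)
    (v : (Fin d → ℝ) → ℝ) (hvp : ZPeriodic v) (hv : Semiconcave v)
    (x y₁ y₂ : Fin d → ℝ)
    (h1 : ∀ z, v x + S x y₁ ≤ v z + S z y₁)
    (h2 : ∀ z, v x + S x y₂ ≤ v z + S z y₂) :
    y₁ = y₂ :=
  optimal_backward_map_injective_general S hfer v hv x y₁ y₂ h1 h2
end
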